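/- arXiv:2310.11636 — 2 statements merged into one kernel-verified Lean document; each statement's English description precedes it below -/
import Mathlib

section
/- Let n, p ≥ 1 and define the model M_{n,p} of dimension n + p by M_{n,p}(e) = true if and only if e i = true for all i < n, or e i = true for all i ≥ n. Then the all-ones total instance 1^{n+p} has exactly two minimal sufficient reasons over M_{n,p}: the partial instance e₁ with e₁ i = some true for i < n and e₁ i = none for i ≥ n, and the partial instance e₂ with e₂ i = none for i < n and e₂ i = some true for i ≥ n. -/
abbrev PI (n : ℕ) : Type := Fin n → Option Bool

def Subs {n : ℕ} (e e' : PI n) : Prop := ∀ i, e i ≠ none → e' i = e i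

/-- `e'` is a sufficient reason for the total instance `e` over the model `M`:
`e' ⊑ e` and every completion of `e'` gets the same classification as `e`. -/
def IsSR {d : ℕ} (M : (Fin d → Bool) → Bool) (e : Fin d → Bool) (e' : PI d) : Prop :=
  Subs e' (fun i => some (e i)) ∧
    ∀ c : Fin d → Bool, Subs e' (fun i => some (c i)) → M c = M e

/-- `e'` is a minimal sufficient reason for `e` over `M`: it is an SR and no partial
instance properly subsumed by `e'` is an SR for `e` over `M`. -/
def IsMinimalSR {d : ℕ} (M : (Fin d → Bool) → Bool) (e : Fin d → Bool) (e' : PI d) : Prop :=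
  IsSR M e e' ∧ ∀ e'' : PI d, Subs e'' e' → e'' ≠ e' → ¬ IsSR M e e''

/-- The model `M_{n,p}` of dimension `n + p`: an instance is positive iff its first `n`
features are all `true` or its last `p` features are all `true`. -/
def Mnp (n p : ℕ) : (Fin (n + p) → Bool) → Bool :=
  fun e => decide (∀ i : Fin (n + p), (i : ℕ) < n → e i = true)
        || decide (∀ i : Fin (n + p), n ≤ (i : ℕ) → e i = true)

lemma Mones (n p : ℕ) : Mnp n p (fun _ => true) = true := by simp [Mnp]

lemma Mfalse (n p : ℕ) (c : Fin (n+p) → Bool) (j k : Fin (n+p))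
    (hj : (j:ℕ) < n) (hk : n ≤ (k:ℕ)) (hcj : c j = false) (hck : c k = false) :
    Mnp n p c = false := by
  simp only [Mnp, Bool.or_eq_false_iff, decide_eq_false_iff_not]
  constructor
  · intro h; have := h j hj; simp [hcj] at this
  · intro h; have := h k hk; simp [hck] at this

theorem stmt12 (n p : ℕ) (hn : 1 ≤ n) (hp : 1 ≤ p) (e' : PI (n + p)) :
    IsMinimalSR (Mnp n p) (fun _ => true) e' ↔
      (e' = fun i : Fin (n + p) => if (i : ℕ) < n then some true else none) ∨
      (e' = fun i : Fin (n + p) => if (i : ℕ) < n then none else some true) := by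
  have hd : 0 < n + p := by omega
  set e1 : PI (n+p) := fun i => if (i:ℕ) < n then some true else none with he1
  set e2 : PI (n+p) := fun i => if (i:ℕ) < n then none else some true with he2
  have kn : Fin (n+p) := ⟨n, by omega⟩
  have hSR1 : IsSR (Mnp n p) (fun _ => true) e1 := by
    constructor
    · intro i hi
      by_cases h : (i:ℕ) < n
      · simp [he1, h]
      · exact absurd (by simp [he1, h]) hi
    · intro c hc
      rw [Mones]
      have h1 : ∀ i : Fin (n+p), (i:ℕ) < n → c i = true := by
        intro i hi
        have := hc i (by simp [he1, hi])
        simpa [he1, hi] using this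
      simp only [Mnp, Bool.or_eq_true, decide_eq_true_eq]
      exact Or.inl h1
  have hSR2 : IsSR (Mnp n p) (fun _ => true) e2 := by
    constructor
    · intro i hi
      by_cases h : (i:ℕ) < n
      · exact absurd (by simp [he2, h]) hi
      · simp [he2, h]
    · intro c hc
      rw [Mones]
      have h1 : ∀ i : Fin (n+p), n ≤ (i:ℕ) → c i = true := by
        intro i hi
        have hni : ¬ (i:ℕ) < n := by omega
        have := hc i (by simp [he2, hni])
        simpa [he2, hni] using this
      simp only [Mnp, Bool.or_eq_true, decide_eq_true_eq]
      exact Or.inr h1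
  constructor
  · rintro ⟨⟨hsub, hcomp⟩, hmin⟩
    have hval : ∀ i, e' i = none ∨ e' i = some true := by
      intro i
      by_cases h : e' i = none
      · exact Or.inl h
      · right; have := hsub i h; simpa using this.symm
    by_cases hA : ∀ i : Fin (n+p), (i:ℕ) < n → e' i = some true
    · left
      by_contra hne
      exact hmin e1 (by
        intro i hi
        by_cases h : (i:ℕ) < n
        · rw [hA i h]; simp [he1, h]
        · simp [he1, h] at hi) (fun h => hne h.symm) hSR1
    · by_cases hB : ∀ i : Fin (n+p), n ≤ (i:ℕ) → e' i = some true
      · right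
        by_contra hne
        exact hmin e2 (by
          intro i hi
          by_cases h : (i:ℕ) < n
          · simp [he2, h] at hi
          · rw [hB i (by omega)]; simp [he2, h]) (fun h => hne h.symm) hSR2
      · exfalso
        push_neg at hA hB
        obtain ⟨j, hj, hj'⟩ := hA
        obtain ⟨k, hk, hk'⟩ := hB
        have hjn : e' j = none := (hval j).resolve_right hj'
        have hkn : e' k = none := (hval k).resolve_right hk'
        set c : Fin (n+p) → Bool := fun m => if m = j ∨ m = k then false else true with hc
        have hsc : Subs e' (fun i => some (c i)) := by
          intro i hi
          have hij : i ≠ j := fun h => hi (h ▸ hjn)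
          have hik : i ≠ k := fun h => hi (h ▸ hkn)
          have : c i = true := by simp [hc, hij, hik]
          show some (c i) = e' i
          rw [this, ((hval i).resolve_left hi)]
        have := hcomp c hsc
        rw [Mones, Mfalse n p c j k hj hk (by simp [hc]) (by simp [hc])] at this
        exact absurd this (by simp)
  · rintro (rfl | rfl)
    · refine ⟨hSR1, ?_⟩
      intro e'' hsub hne ⟨hsub', hcomp'⟩
      have hex : ∃ j, e'' j ≠ e1 j := by
        by_contra h; push_neg at h; exact hne (funext h)
      obtain ⟨j, hj⟩ := hex
      have hjnone : e'' j = none := by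
        by_contra h; exact hj (hsub j h).symm
      have hjn : (j:ℕ) < n := by
        by_contra h
        exact hj (by simp [hjnone, he1, h])
      set c : Fin (n+p) → Bool := fun m => if m = j ∨ n ≤ (m:ℕ) then false else true with hc
      have hsc : Subs e'' (fun i => some (c i)) := by
        intro i hi
        have h1 : e1 i = e'' i := hsub i hi
        have hin : (i:ℕ) < n := by
          by_contra h; simp [he1, h] at h1; exact hi h1.symm
        have hij : i ≠ j := fun h => hi (h ▸ hjnone)
        have : c i = true := by simp [hc, hij]; omega
        show some (c i) = e'' i
        rw [this, ← h1]; simp [he1, hin]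
      have := hcomp' c hsc
      rw [Mones, Mfalse n p c j ⟨n, by omega⟩ hjn (le_refl n) (by simp [hc]) (by simp [hc])] at this
      exact absurd this (by simp)
    · refine ⟨hSR2, ?_⟩
      intro e'' hsub hne ⟨hsub', hcomp'⟩
      have hex : ∃ j, e'' j ≠ e2 j := by
        by_contra h; push_neg at h; exact hne (funext h)
      obtain ⟨j, hj⟩ := hex
      have hjnone : e'' j = none := by
        by_contra h; exact hj (hsub j h).symm
      have hjn : n ≤ (j:ℕ) := by
        by_contra h
        exact hj (by simp [hjnone, he2, show (j:ℕ) < n by omega])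
      set c : Fin (n+p) → Bool := fun m => if m = j ∨ (m:ℕ) < n then false else true with hc
      have hsc : Subs e'' (fun i => some (c i)) := by
        intro i hi
        have h1 : e2 i = e'' i := hsub i hi
        have hin : ¬ (i:ℕ) < n := by
          by_contra h; simp [he2, h] at h1; exact hi h1.symm
        have hij : i ≠ j := fun h => hi (h ▸ hjnone)
        have : c i = true := by simp [hc, hij]; omega
        show some (c i) = e'' i
        rw [this, ← h1]; simp [he2, hin]
      have := hcomp' c hsc
      rw [Mones, Mfalse n p c ⟨0, by omega⟩ j (by show 0 < n; omega) hjn (by simp [hc]; omega) (by simp [hc])] at this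
      exact absurd this (by simp)
end

section
/- Let n, p ≥ 1 and define the model M_{n,p} of dimension n + p by M_{n,p}(e) = true if and only if e i = true for all i < n, or e i = true for all i ≥ n. Let e₂ be the partial instance with e₂ i = none for i < n and e₂ i = some true for i ≥ n. Then e₂ is a minimum sufficient reason for the all-ones total instance 1^{n+p} over M_{n,p} if and only if p ≤ n. -/
noncomputable def undefCard {n : ℕ} (e : PI n) : ℕ := Set.ncard {i | e i = none}

/-- `e'` is a minimum sufficient reason for `e` over `M`: it is an SR and no SR for `e`
over `M` has strictly more undefined features. -/
def IsMinimumSR {d : ℕ} (M : (Fin d → Bool) → Bool) (e : Fin d → Bool) (e' : PI d) : Prop :=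
  IsSR M e e' ∧ ∀ e'' : PI d, IsSR M e e'' → undefCard e'' ≤ undefCard e'

/-!
The SR `e₂`, which fixes the last `p` features, leaves the `n` features of the first block
undefined, and symmetrically fixing the first block gives an SR with `p` undefined features.
Conversely, completing an SR for `1` by `false` everywhere must still give a positive instance,
so the SR defines every feature of one of the two blocks; hence it has at most `max n p`
undefined features.
-/

section SufficientReason

variable {d : ℕ}

lemma subs_some_getD (e : PI d) (b : Bool) : Subs e (fun i => some ((e i).getD b)) := by
  intro i hi
  obtain ⟨x, hx⟩ := Option.ne_none_iff_exists'.mp hi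
  simp [hx]

lemma IsSR.apply_getD {M : (Fin d → Bool) → Bool} {e : Fin d → Bool} {e' : PI d}
    (h : IsSR M e e') (b : Bool) : M (fun i => (e' i).getD b) = M e :=
  h.2 _ (subs_some_getD e' b)

lemma isSR_ite_none_iff (M : (Fin d → Bool) → Bool) (e : Fin d → Bool) (P : Fin d → Prop)
    [DecidablePred P] :
    IsSR M e (fun i => if P i then none else some (e i)) ↔
      ∀ c : Fin d → Bool, (∀ i, ¬P i → c i = e i) → M c = M e := by
  refine ⟨fun h c hc => h.2 c fun i hi => ?_, fun h => ⟨fun i hi => ?_, fun c hc => h c ?_⟩⟩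
  · have hPi : ¬P i := fun hPi => hi (if_pos hPi)
    simp [hPi, hc i hPi]
  · have hPi : ¬P i := fun hPi => hi (if_pos hPi)
    simp [hPi]
  · intro i hPi
    simpa [hPi] using hc i (by simp [hPi])

lemma undefCard_ite_none (P : Fin d → Prop) [DecidablePred P] (b : Fin d → Bool) :
    undefCard (fun i => if P i then none else some (b i)) = {i | P i}.ncard := by
  unfold undefCard
  congr 1
  ext i
  by_cases hPi : P i <;> simp [hPi]

lemma undefCard_le_of_subset {e : PI d} {S : Set (Fin d)} (h : {i | e i = none} ⊆ S) :
    undefCard e ≤ S.ncard :=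
  Set.ncard_le_ncard h

end SufficientReason

section Blocks

variable (n p : ℕ)

lemma ncard_val_lt : {i : Fin (n + p) | (i : ℕ) < n}.ncard = n := by
  rw [← Fin.range_castLE (Nat.le_add_right n p), Set.ncard_range_of_injective (Fin.castLE_injective _),
    Nat.card_eq_fintype_card, Fintype.card_fin]

lemma ncard_le_val : {i : Fin (n + p) | n ≤ (i : ℕ)}.ncard = p := by
  rw [← Fin.range_natAdd, Set.ncard_range_of_injective (Fin.natAdd_injective p n),
    Nat.card_eq_fintype_card, Fintype.card_fin]

end Blocks

section Mnp

variable {n p : ℕ}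

lemma Mnp_eq_true_iff (c : Fin (n + p) → Bool) :
    Mnp n p c = true ↔ (∀ i : Fin (n + p), (i : ℕ) < n → c i = true) ∨
      ∀ i : Fin (n + p), n ≤ (i : ℕ) → c i = true := by
  simp [Mnp]

lemma Mnp_one : Mnp n p (fun _ => true) = true := by
  simp [Mnp]

lemma isSR_Mnp_high_block :
    IsSR (Mnp n p) (fun _ => true) (fun i : Fin (n + p) => if (i : ℕ) < n then none else some true) :=
  (isSR_ite_none_iff _ _ (fun i : Fin (n + p) => (i : ℕ) < n)).2 fun c hc => by
    rw [Mnp_one, Mnp_eq_true_iff]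
    exact Or.inr fun i hi => hc i (Nat.not_lt.2 hi)

lemma isSR_Mnp_low_block :
    IsSR (Mnp n p) (fun _ => true) (fun i : Fin (n + p) => if n ≤ (i : ℕ) then none else some true) :=
  (isSR_ite_none_iff _ _ (fun i : Fin (n + p) => n ≤ (i : ℕ))).2 fun c hc => by
    rw [Mnp_one, Mnp_eq_true_iff]
    exact Or.inl fun i hi => hc i (Nat.not_le.2 hi)

lemma undefCard_le_max_of_isSR_Mnp {e : PI (n + p)} (h : IsSR (Mnp n p) (fun _ => true) e) :
    undefCard e ≤ max n p := by
  have hfill := h.apply_getD false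
  rw [Mnp_one, Mnp_eq_true_iff] at hfill
  rcases hfill with hlow | hhigh
  · have hsub : {i | e i = none} ⊆ {i : Fin (n + p) | n ≤ (i : ℕ)} := fun i (hi : e i = none) =>
      Nat.not_lt.1 fun hlt => by simpa [hi] using hlow i hlt
    calc undefCard e ≤ p := (undefCard_le_of_subset hsub).trans_eq (ncard_le_val n p)
      _ ≤ max n p := le_max_right n p
  · have hsub : {i | e i = none} ⊆ {i : Fin (n + p) | (i : ℕ) < n} := fun i (hi : e i = none) =>
      Nat.not_le.1 fun hle => by simpa [hi] using hhigh i hle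
    calc undefCard e ≤ n := (undefCard_le_of_subset hsub).trans_eq (ncard_val_lt n p)
      _ ≤ max n p := le_max_left n p

end Mnp

theorem stmt13_general (n p : ℕ) :
    IsMinimumSR (Mnp n p) (fun _ => true)
        (fun i : Fin (n + p) => if (i : ℕ) < n then none else some true) ↔ p ≤ n := by
  have hcard_high : undefCard (fun i : Fin (n + p) => if (i : ℕ) < n then none else some true) = n :=
    (undefCard_ite_none _ fun _ => true).trans (ncard_val_lt n p)
  have hcard_low : undefCard (fun i : Fin (n + p) => if n ≤ (i : ℕ) then none else some true) = p :=
    (undefCard_ite_none _ fun _ => true).trans (ncard_le_val n p)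
  constructor
  · intro h
    simpa [hcard_high, hcard_low] using h.2 _ isSR_Mnp_low_block
  · intro hpn
    refine ⟨isSR_Mnp_high_block, fun e he => ?_⟩
    rw [hcard_high]
    exact (undefCard_le_max_of_isSR_Mnp he).trans_eq (max_eq_left hpn)

theorem stmt13 (n p : ℕ) (hn : 1 ≤ n) (hp : 1 ≤ p) :
    IsMinimumSR (Mnp n p) (fun _ => true)
        (fun i : Fin (n + p) => if (i : ℕ) < n then none else some true) ↔ p ≤ n :=
  stmt13_general n p
end
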